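/- arXiv:2510.20817 — 3 statements merged into one kernel-verified Lean document; each statement's English description precedes it below -/
import Mathlib

section
/- The identity J_{β,η}(π) = −(β+η)·D_KL(π‖G_{β,η}) + (β+η)·log ζ_{β,η} holds for every strictly positive pmf π. -/
/-!
The maximiser of `J` is the Gibbs distribution `G ∝ w` with
`log w = (β/(β+η)) log π_ref + R/(β+η)`. Expanding `∑ π log (π / G)` as
`∑ π log π - ∑ π log w + log ζ` and substituting `log w` turns `-(β+η)` times the KL divergence
into `J(π) - (β+η) log ζ`.
-/

open Real Finset

lemma Real.mul_log_div {x y : ℝ} (hy : y ≠ 0) : x * log (x / y) = x * log x - x * log y := by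
  rcases eq_or_ne x 0 with rfl | hx
  · simp
  · rw [log_div hx hy]; ring

lemma sum_mul_log_div {Y : Type*} [Fintype Y] (p q : Y → ℝ) (hq : ∀ y, q y ≠ 0) :
    ∑ y, p y * log (p y / q y) = ∑ y, p y * log (p y) - ∑ y, p y * log (q y) := by
  simp only [Real.mul_log_div (hq _), sum_sub_distrib]

lemma sum_mul_log_div_normalized {Y : Type*} [Fintype Y] (p w : Y → ℝ) (hw : ∀ y, 0 < w y)
    (hp1 : ∑ y, p y = 1) :
    ∑ y, p y * log (p y / (w y / ∑ z, w z))
      = ∑ y, p y * log (p y) - ∑ y, p y * log (w y) + log (∑ z, w z) := by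
  have : Nonempty Y := by
    by_contra h
    simp [not_nonempty_iff.mp h] at hp1
  have hZ : 0 < ∑ z, w z := sum_pos (fun y _ => hw y) univ_nonempty
  have hlog : ∀ y, log (w y / ∑ z, w z) = log (w y) - log (∑ z, w z) :=
    fun y => log_div (hw y).ne' hZ.ne'
  rw [sum_mul_log_div _ _ (fun y => (div_pos (hw y) hZ).ne')]
  simp only [hlog, mul_sub, sum_sub_distrib, ← sum_mul, hp1, one_mul]
  ring

theorem kl_entropy_reg_identity_general {Y : Type*} [Fintype Y]
    (pref : Y → ℝ) (hpos : ∀ y, 0 < pref y)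
    (R : Y → ℝ) (β η : ℝ) (hβη : 0 < β + η)
    (ζ : ℝ) (hζ : ζ = ∑ y, pref y ^ (β / (β + η)) * exp (R y / (β + η)))
    (G : Y → ℝ) (hG : ∀ y, G y = pref y ^ (β / (β + η)) * exp (R y / (β + η)) / ζ)
    (J : (Y → ℝ) → ℝ)
    (hJ : ∀ p : Y → ℝ, J p = (∑ y, p y * R y)
      - β * (∑ y, p y * log (p y / pref y))
      - η * (∑ y, p y * log (p y)))
    (p : Y → ℝ) (hp1 : ∑ y, p y = 1) :
    J p = -(β + η) * (∑ y, p y * log (p y / G y)) + (β + η) * log ζ := by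
  set w : Y → ℝ := fun y => pref y ^ (β / (β + η)) * exp (R y / (β + η))
  have hw : ∀ y, 0 < w y := fun y => mul_pos (rpow_pos_of_pos (hpos y) _) (exp_pos _)
  have hlog_w : ∀ y, p y * log (w y) = β / (β + η) * (p y * log (pref y)) + p y * R y / (β + η) :=
    fun y => by rw [log_mul (rpow_pos_of_pos (hpos y) _).ne' (exp_pos _).ne', log_rpow (hpos y),
      log_exp]; ring
  have hkl : ∑ y, p y * log (p y / G y)
      = ∑ y, p y * log (p y) - (β / (β + η) * ∑ y, p y * log (pref y)
        + (∑ y, p y * R y) / (β + η)) + log ζ := by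
    simp only [hG, hζ]
    rw [sum_mul_log_div_normalized p w hw hp1]
    simp only [hlog_w, sum_add_distrib, ← mul_sum, ← sum_div]
  rw [hJ, hkl, sum_mul_log_div _ _ (fun y => (hpos y).ne')]
  field_simp
  ring

theorem kl_entropy_reg_identity {Y : Type*} [Fintype Y]
    (pref : Y → ℝ) (hpos : ∀ y, 0 < pref y) (hsum : ∑ y, pref y = 1)
    (R : Y → ℝ) (β η : ℝ) (hβ : 0 ≤ β) (hη : 0 ≤ η) (hβη : 0 < β + η)
    (ζ : ℝ) (hζ : ζ = ∑ y, pref y ^ (β / (β + η)) * exp (R y / (β + η)))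
    (G : Y → ℝ) (hG : ∀ y, G y = pref y ^ (β / (β + η)) * exp (R y / (β + η)) / ζ)
    (J : (Y → ℝ) → ℝ)
    (hJ : ∀ p : Y → ℝ, J p = (∑ y, p y * R y)
      - β * (∑ y, p y * log (p y / pref y))
      - η * (∑ y, p y * log (p y)))
    (p : Y → ℝ) (hp0 : ∀ y, 0 < p y) (hp1 : ∑ y, p y = 1) :
    J p = -(β + η) * (∑ y, p y * log (p y / G y)) + (β + η) * log ζ :=
  kl_entropy_reg_identity_general pref hpos R β η hβη ζ hζ G hG J hJ p hp1
end

section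
/- For the forward-KL-regularized objective on a finite type: if a maximizer π* exists among distributions supported within supp(π_ref) with π*(y) > 0 for all y ∈ supp(π_ref), then there exists Λ > max over supp(π_ref) of R(y) such that π*(y) = β·π_ref(y)/(Λ − R(y)) for all y ∈ supp(π_ref). -/
open Real Finset

/-!
Moving mass `t` from one point `y₂` of the support to another point `y₁` keeps `π*` admissible
for `t ∈ (-π*(y₁), π*(y₂))`, and up to a constant the objective becomes
`t (R y₁ - R y₂) + β π_ref(y₁) log (π*(y₁) + t) + β π_ref(y₂) log (π*(y₂) - t)`.
Since `t = 0` is a maximum, the derivative vanishes there, so the marginal gain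
`R y + β π_ref(y) / π*(y)` takes the same value `Λ` at every point of the support.
Solving for `π*(y)` gives the claimed form, and `Λ - R y = β π_ref(y) / π*(y) > 0`.
-/

lemma add_div_eq_div_of_forall_mul_add_log_le {a b c w₁ w₂ : ℝ} (ha : 0 < a) (hb : 0 < b)
    (hmax : ∀ t ∈ Set.Ioo (-a) b,
      t * c + w₁ * log (a + t) + w₂ * log (b - t) ≤ w₁ * log a + w₂ * log b) :
    c + w₁ / a = w₂ / b := by
  set φ : ℝ → ℝ := fun t => t * c + w₁ * log (a + t) + w₂ * log (b - t)
  have hderiv : HasDerivAt φ (c + w₁ / a - w₂ / b) 0 := by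
    have h₁ : HasDerivAt (fun t => log (a + t)) (1 / a) 0 := by
      simpa using ((hasDerivAt_id (0 : ℝ)).const_add a).log (by simpa using ha.ne')
    have h₂ : HasDerivAt (fun t => log (b - t)) (-1 / b) 0 := by
      simpa using ((hasDerivAt_id (0 : ℝ)).const_sub b).log (by simpa using hb.ne')
    exact (((hasDerivAt_mul_const c).add (h₁.const_mul w₁)).add (h₂.const_mul w₂)).congr_deriv
      (by ring)
  have hloc : IsLocalMax φ 0 := by
    filter_upwards [Ioo_mem_nhds (neg_neg_of_pos ha) hb] with t ht
    simpa [φ] using hmax t ht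
  linarith [hloc.hasDerivAt_eq_zero hderiv]

section Objective

variable {Y : Type*} [Fintype Y]

noncomputable def fwdKL (pref R : Y → ℝ) (β : ℝ) (p : Y → ℝ) : ℝ :=
  ∑ y, p y * R y - β * ∑ y, pref y * log (pref y / p y)

structure IsAdmissible (pref p : Y → ℝ) : Prop where
  nonneg : ∀ y, 0 ≤ p y
  sum_eq_one : ∑ y, p y = 1
  pos_of_pos : ∀ y, 0 < pref y → 0 < p y
  eq_zero_of_eq_zero : ∀ y, pref y = 0 → p y = 0

lemma fwdKL_eq_sum (pref R : Y → ℝ) (β : ℝ) (p : Y → ℝ) :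
    fwdKL pref R β p = ∑ y, (p y * R y - β * (pref y * log (pref y / p y))) := by
  rw [fwdKL, sum_sub_distrib, mul_sum]

end Objective

section Transfer

variable {Y : Type*} [DecidableEq Y]

def transferMass (p : Y → ℝ) (y₁ y₂ : Y) (t : ℝ) : Y → ℝ :=
  p + Pi.single y₁ t - Pi.single y₂ t

variable {p : Y → ℝ} {y₁ y₂ : Y} {t : ℝ}

lemma transferMass_apply_left (h : y₁ ≠ y₂) : transferMass p y₁ y₂ t y₁ = p y₁ + t := by
  simp [transferMass, h]

lemma transferMass_apply_right (h : y₁ ≠ y₂) : transferMass p y₁ y₂ t y₂ = p y₂ - t := by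
  simp [transferMass, h.symm]

lemma transferMass_apply_of_ne {y : Y} (h₁ : y ≠ y₁) (h₂ : y ≠ y₂) :
    transferMass p y₁ y₂ t y = p y := by
  simp [transferMass, h₁, h₂]

variable [Fintype Y]

lemma sum_comp_transferMass (f : Y → ℝ → ℝ) (h : y₁ ≠ y₂) :
    ∑ y, f y (transferMass p y₁ y₂ t y) = ∑ y, f y (p y)
      + (f y₁ (p y₁ + t) - f y₁ (p y₁)) + (f y₂ (p y₂ - t) - f y₂ (p y₂)) := by
  have hdiff : ∑ y, (f y (transferMass p y₁ y₂ t y) - f y (p y))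
      = (f y₁ (p y₁ + t) - f y₁ (p y₁)) + (f y₂ (p y₂ - t) - f y₂ (p y₂)) := by
    rw [Fintype.sum_eq_add y₁ y₂ h fun y hy => by
      rw [transferMass_apply_of_ne hy.1 hy.2, sub_self]]
    rw [transferMass_apply_left h, transferMass_apply_right h]
  rw [sum_sub_distrib] at hdiff
  linarith

lemma isAdmissible_transferMass {pref : Y → ℝ} (hp : IsAdmissible pref p) (h : y₁ ≠ y₂)
    (h₁ : 0 < pref y₁) (h₂ : 0 < pref y₂) (ht : t ∈ Set.Ioo (-p y₁) (p y₂)) :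
    IsAdmissible pref (transferMass p y₁ y₂ t) := by
  obtain ⟨hp0, hp1, hpos, hoff⟩ := hp
  have hleft : 0 < transferMass p y₁ y₂ t y₁ := by
    rw [transferMass_apply_left h]; linarith [ht.1]
  have hright : 0 < transferMass p y₁ y₂ t y₂ := by
    rw [transferMass_apply_right h]; linarith [ht.2]
  refine ⟨fun y => ?_, ?_, fun y hy => ?_, fun y hy => ?_⟩
  · rcases eq_or_ne y y₁ with rfl | hy₁
    · exact hleft.le
    rcases eq_or_ne y y₂ with rfl | hy₂
    · exact hright.le
    · rw [transferMass_apply_of_ne hy₁ hy₂]; exact hp0 y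
  · exact (sum_comp_transferMass (fun _ x => x) h).trans (by rw [hp1]; ring)
  · rcases eq_or_ne y y₁ with rfl | hy₁
    · exact hleft
    rcases eq_or_ne y y₂ with rfl | hy₂
    · exact hright
    · rw [transferMass_apply_of_ne hy₁ hy₂]; exact hpos y hy
  · have hy₁ : y ≠ y₁ := by rintro rfl; exact h₁.ne' hy
    have hy₂ : y ≠ y₂ := by rintro rfl; exact h₂.ne' hy
    rw [transferMass_apply_of_ne hy₁ hy₂]; exact hoff y hy

end Transfer

lemma IsAdmissible.marginal_eq_of_isMaxOn {Y : Type*} [Fintype Y] {pref R pstar : Y → ℝ} {β : ℝ}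
    (hstar : IsAdmissible pref pstar)
    (hmax : IsMaxOn (fwdKL pref R β) {p | IsAdmissible pref p} pstar)
    {y₁ y₂ : Y} (h₁ : 0 < pref y₁) (h₂ : 0 < pref y₂) :
    R y₁ + β * pref y₁ / pstar y₁ = R y₂ + β * pref y₂ / pstar y₂ := by
  classical
  rcases eq_or_ne y₁ y₂ with rfl | hne
  · rfl
  have ha := hstar.pos_of_pos y₁ h₁
  have hb := hstar.pos_of_pos y₂ h₂
  suffices (R y₁ - R y₂) + β * pref y₁ / pstar y₁ = β * pref y₂ / pstar y₂ by linarith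
  refine add_div_eq_div_of_forall_mul_add_log_le ha hb fun t ht => ?_
  have hle : fwdKL pref R β _ ≤ _ := hmax (isAdmissible_transferMass hstar hne h₁ h₂ ht)
  have hsplit := sum_comp_transferMass (p := pstar) (t := t)
    (fun y x => x * R y - β * (pref y * log (pref y / x))) hne
  beta_reduce at hsplit
  rw [fwdKL_eq_sum, fwdKL_eq_sum, hsplit] at hle
  have hpos₁ : 0 < pstar y₁ + t := by linarith [ht.1]
  have hpos₂ : 0 < pstar y₂ - t := by linarith [ht.2]
  rw [log_div h₁.ne' hpos₁.ne', log_div h₁.ne' ha.ne', log_div h₂.ne' hpos₂.ne',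
    log_div h₂.ne' hb.ne'] at hle
  linear_combination hle

theorem fwd_kl_maximizer_form_general {Y : Type*} [Fintype Y]
    (pref : Y → ℝ) (hsum : ∑ y, pref y = 1)
    (R : Y → ℝ) (β : ℝ) (hβ : 0 < β)
    (Jfwd : (Y → ℝ) → ℝ)
    (hJ : ∀ p : Y → ℝ, Jfwd p = (∑ y, p y * R y)
      - β * ∑ y, pref y * log (pref y / p y))
    (pstar : Y → ℝ)
    (hstar0 : ∀ y, 0 ≤ pstar y) (hstar1 : ∑ y, pstar y = 1)
    (hstarpos : ∀ y, 0 < pref y → 0 < pstar y)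
    (hstaroff : ∀ y, pref y = 0 → pstar y = 0)
    (hmax : ∀ p : Y → ℝ, (∀ y, 0 ≤ p y) → (∑ y, p y = 1) →
      (∀ y, 0 < pref y → 0 < p y) → (∀ y, pref y = 0 → p y = 0) →
      Jfwd p ≤ Jfwd pstar) :
    ∃ Λ : ℝ, (∀ y, 0 < pref y → R y < Λ) ∧
      ∀ y, 0 < pref y → pstar y = β * pref y / (Λ - R y) := by
  obtain rfl : Jfwd = fwdKL pref R β := funext hJ
  have hstar : IsAdmissible pref pstar := ⟨hstar0, hstar1, hstarpos, hstaroff⟩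
  have hmaxOn : IsMaxOn (fwdKL pref R β) {p | IsAdmissible pref p} pstar :=
    fun p ⟨h0, h1, hpos, hoff⟩ => hmax p h0 h1 hpos hoff
  obtain ⟨y₀, -, hy₀⟩ : ∃ y ∈ univ, 0 < pref y :=
    exists_lt_of_sum_lt (by simp [hsum])
  obtain ⟨Λ, hΛ⟩ : ∃ Λ, ∀ y, 0 < pref y → Λ - R y = β * pref y / pstar y :=
    ⟨R y₀ + β * pref y₀ / pstar y₀, fun y hy => by
      rw [← hstar.marginal_eq_of_isMaxOn hmaxOn hy hy₀]; ring⟩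
  refine ⟨Λ, fun y hy => ?_, fun y hy => ?_⟩ <;> have := hstarpos y hy
  · linarith [hΛ y hy, show 0 < β * pref y / pstar y by positivity]
  · rw [hΛ y hy, div_div_eq_mul_div, mul_div_cancel_left₀ _ (by positivity)]

theorem fwd_kl_maximizer_form {Y : Type*} [Fintype Y]
    (pref : Y → ℝ) (hpos : ∀ y, 0 ≤ pref y) (hsum : ∑ y, pref y = 1)
    (R : Y → ℝ) (β : ℝ) (hβ : 0 < β)
    (Jfwd : (Y → ℝ) → ℝ)
    (hJ : ∀ p : Y → ℝ, Jfwd p = (∑ y, p y * R y)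
      - β * ∑ y, pref y * log (pref y / p y))
    (pstar : Y → ℝ)
    (hstar0 : ∀ y, 0 ≤ pstar y) (hstar1 : ∑ y, pstar y = 1)
    (hstarpos : ∀ y, 0 < pref y → 0 < pstar y)
    (hstaroff : ∀ y, pref y = 0 → pstar y = 0)
    (hmax : ∀ p : Y → ℝ, (∀ y, 0 ≤ p y) → (∑ y, p y = 1) →
      (∀ y, 0 < pref y → 0 < p y) → (∀ y, pref y = 0 → p y = 0) →
      Jfwd p ≤ Jfwd pstar) :
    ∃ Λ : ℝ, (∀ y, 0 < pref y → R y < Λ) ∧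
      ∀ y, 0 < pref y → pstar y = β * pref y / (Λ - R y) :=
  fwd_kl_maximizer_form_general pref hsum R β hβ Jfwd hJ pstar hstar0 hstar1 hstarpos hstaroff hmax
end

section
/- Off-support mass is suboptimal for forward-KL regularization: suppose the reward R is bounded with maximum R_max attained at some point in the support of π_ref. Then for any pmf π placing positive mass outside supp(π_ref), there exists a pmf π′ supported within supp(π_ref) with J_fwd(π′) > J_fwd(π). -/
/-!
Move all the mass that `π` puts off the support of `π_ref` onto a maximiser `y₀` of the reward
inside the support. The expected reward cannot drop, since the mass lands where `R` is largest,
and the forward KL divergence strictly drops: only the term at `y₀` changes, and there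
`π(y₀)` strictly increases while `π_ref(y₀) > 0`.
-/

open Real Finset

section MoveMass

variable {Y : Type*} [DecidableEq Y]

def moveMass (S : Finset Y) (y₀ : Y) (p : Y → ℝ) (y : Y) : ℝ :=
  (if y ∈ S then 0 else p y) + if y = y₀ then ∑ x ∈ S, p x else 0

variable {S : Finset Y} {y₀ : Y} {p : Y → ℝ}

theorem moveMass_of_mem (h₀ : y₀ ∉ S) {y : Y} (hy : y ∈ S) : moveMass S y₀ p y = 0 := by
  simp [moveMass, hy, ne_of_mem_of_not_mem hy h₀]

theorem moveMass_self (h₀ : y₀ ∉ S) : moveMass S y₀ p y₀ = p y₀ + ∑ x ∈ S, p x := by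
  simp [moveMass, h₀]

theorem moveMass_of_ne {y : Y} (hy : y ∉ S) (hne : y ≠ y₀) : moveMass S y₀ p y = p y := by
  simp [moveMass, hy, hne]

theorem moveMass_nonneg (hp : ∀ y, 0 ≤ p y) (y : Y) : 0 ≤ moveMass S y₀ p y := by
  have hS : 0 ≤ ∑ x ∈ S, p x := sum_nonneg fun x _ => hp x
  unfold moveMass
  split_ifs <;> linarith [hp y]

theorem sum_moveMass_mul [Fintype Y] (f : Y → ℝ) :
    ∑ y, moveMass S y₀ p y * f y = ∑ y, p y * f y + ∑ x ∈ S, p x * (f y₀ - f x) := by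
  have hsplit := sum_add_sum_compl S (fun y => p y * f y)
  simp only [moveMass, add_mul, ite_mul, zero_mul, sum_add_distrib, sum_ite_eq', mem_univ,
    if_true, mul_sub, sum_sub_distrib, ← sum_mul]
  rw [sum_ite, sum_const_zero, zero_add, filter_not, ← compl_eq_univ_sdiff,
    filter_mem_eq_inter, univ_inter]
  linarith

end MoveMass

theorem sum_mul_log_div_sub_eq {Y : Type*} [Fintype Y] {q p p' : Y → ℝ} (y₀ : Y)
    (h : ∀ y ≠ y₀, q y ≠ 0 → p' y = p y) :
    ∑ y, q y * log (q y / p' y) - ∑ y, q y * log (q y / p y)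
      = q y₀ * (log (q y₀ / p' y₀) - log (q y₀ / p y₀)) := by
  rw [← sum_sub_distrib, sum_eq_single y₀ _ (by simp), mul_sub]
  intro y _ hy
  by_cases hq : q y = 0
  · simp [hq]
  · rw [h y hy hq, sub_self]

theorem off_support_mass_suboptimal_general {Y : Type*} [Fintype Y]
    (pref : Y → ℝ)
    (R : Y → ℝ) (β : ℝ) (hβ : 0 < β)
    (y₀ : Y) (hy₀pos : 0 < pref y₀) (hy₀max : ∀ y, R y ≤ R y₀)
    (p : Y → ℝ) (hp0 : ∀ y, 0 ≤ p y) (hp1 : ∑ y, p y = 1)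
    (hpsupp : ∀ y, 0 < pref y → 0 < p y)
    (hoff : ∃ y, pref y = 0 ∧ 0 < p y) :
    ∃ p' : Y → ℝ, (∀ y, 0 ≤ p' y) ∧ (∑ y, p' y = 1) ∧
      (∀ y, pref y = 0 → p' y = 0) ∧ (∀ y, 0 < pref y → 0 < p' y) ∧
      ((∑ y, p y * R y) - β * ∑ y, pref y * log (pref y / p y))
        < ((∑ y, p' y * R y) - β * ∑ y, pref y * log (pref y / p' y)) := by
  classical
  set S := univ.filter (pref · = 0)
  have hy₀S : y₀ ∉ S := by simpa [S] using hy₀pos.ne'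
  obtain ⟨z, hz0, hzp⟩ := hoff
  have hm : 0 < ∑ x ∈ S, p x := sum_pos' (fun x _ => hp0 x) ⟨z, by simpa [S], hzp⟩
  have hpy₀ := hpsupp y₀ hy₀pos
  have hreward : ∑ y, p y * R y ≤ ∑ y, moveMass S y₀ p y * R y := by
    rw [sum_moveMass_mul]
    linarith [sum_nonneg fun x (_ : x ∈ S) => mul_nonneg (hp0 x) (sub_nonneg.2 (hy₀max x))]
  have hkl : ∑ y, pref y * log (pref y / moveMass S y₀ p y) - ∑ y, pref y * log (pref y / p y)
      < 0 := by
    rw [sum_mul_log_div_sub_eq y₀ fun y hne hy => moveMass_of_ne (by simpa [S]) hne,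
      moveMass_self hy₀S]
    refine mul_neg_of_pos_of_neg hy₀pos (sub_neg.2 ?_)
    exact log_lt_log (by positivity) (div_lt_div_of_pos_left hy₀pos hpy₀ (by linarith))
  refine ⟨moveMass S y₀ p, moveMass_nonneg hp0, ?_, fun y hy => moveMass_of_mem hy₀S
    (by simpa [S]), fun y hy => ?_, ?_⟩
  · simpa [hp1] using sum_moveMass_mul (S := S) (y₀ := y₀) (p := p) 1
  · rcases eq_or_ne y y₀ with rfl | hne
    · rw [moveMass_self hy₀S]; linarith
    · rw [moveMass_of_ne (by simpa [S] using hy.ne') hne]; exact hpsupp y hy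
  · linarith [mul_neg_of_pos_of_neg hβ hkl]

theorem off_support_mass_suboptimal {Y : Type*} [Fintype Y]
    (pref : Y → ℝ) (hpos : ∀ y, 0 ≤ pref y) (hsum : ∑ y, pref y = 1)
    (R : Y → ℝ) (β : ℝ) (hβ : 0 < β)
    (y₀ : Y) (hy₀pos : 0 < pref y₀) (hy₀max : ∀ y, R y ≤ R y₀)
    (p : Y → ℝ) (hp0 : ∀ y, 0 ≤ p y) (hp1 : ∑ y, p y = 1)
    (hpsupp : ∀ y, 0 < pref y → 0 < p y)
    (hoff : ∃ y, pref y = 0 ∧ 0 < p y) :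
    ∃ p' : Y → ℝ, (∀ y, 0 ≤ p' y) ∧ (∑ y, p' y = 1) ∧
      (∀ y, pref y = 0 → p' y = 0) ∧ (∀ y, 0 < pref y → 0 < p' y) ∧
      ((∑ y, p y * R y) - β * ∑ y, pref y * log (pref y / p y))
        < ((∑ y, p' y * R y) - β * ∑ y, pref y * log (pref y / p' y)) :=
  off_support_mass_suboptimal_general pref R β hβ y₀ hy₀pos hy₀max p hp0 hp1 hpsupp hoff
end
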